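/- arXiv:1604.00635 — 2 statements merged into one kernel-verified Lean document; each statement's English description precedes it below -/
import Mathlib

section
/- Let Φ denote the cumulative distribution function of the standard Gaussian distribution, let v > 0, and let P be a probability density function on ℝ. Define φ[P,v](t) := log₂ ∫_{-∞}^{∞} ( Φ(x/√v)^{1/(1−t)} + (1 − Φ(x/√v))^{1/(1−t)} )^{1−t} P(x) dx and H[P,v] := −∫_{-∞}^{∞} [ Φ(x/√v) log₂ Φ(x/√v) + (1 − Φ(x/√v)) log₂ (1 − Φ(x/√v)) ] P(x) dx. Then the right derivative of φ[P,v] at 0 equals −H[P,v]; that is, −(d/ds) φ[P,v](s) at s = 0 equals H[P,v]. -/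
open MeasureTheory Real

/-- The standard Gaussian cumulative distribution function. -/
noncomputable def stdGaussianCDF (x : ℝ) : ℝ :=
  ∫ u in Set.Iic x, (1 / Real.sqrt (2 * Real.pi)) * Real.exp (-u ^ 2 / 2)

lemma gauss_density_integrable :
    Integrable (fun u : ℝ => (1 / Real.sqrt (2 * Real.pi)) * Real.exp (-u ^ 2 / 2)) := by
  have h := (integrable_exp_neg_mul_sq (b := (1/2 : ℝ)) (by norm_num)).const_mul
    (1 / Real.sqrt (2 * Real.pi))
  have he : ∀ u : ℝ, -u ^ 2 / 2 = -(1/2) * u ^ 2 := fun u => by ring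
  simpa [he] using h

lemma gauss_total : ∫ u : ℝ, (1 / Real.sqrt (2 * Real.pi)) * Real.exp (-u ^ 2 / 2) = 1 := by
  have he : ∀ u : ℝ, -u ^ 2 / 2 = -(1/2) * u ^ 2 := fun u => by ring
  have h := integral_gaussian (1/2 : ℝ)
  have h2 : (π / (1/2 : ℝ)) = 2 * π := by ring
  rw [h2] at h
  rw [integral_const_mul]
  simp_rw [he]
  rw [h, one_div, inv_mul_cancel₀]
  positivity

lemma stdGaussianCDF_nonneg (x : ℝ) : 0 ≤ stdGaussianCDF x :=
  setIntegral_nonneg measurableSet_Iic (fun u _ => by positivity)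

lemma stdGaussianCDF_le_one (x : ℝ) : stdGaussianCDF x ≤ 1 := by
  rw [← gauss_total]
  exact setIntegral_le_integral gauss_density_integrable
    (Filter.Eventually.of_forall (fun u => by positivity))

lemma stdGaussianCDF_measurable : Measurable stdGaussianCDF := by
  have hmono : Monotone stdGaussianCDF := by
    intro a b hab
    exact setIntegral_mono_set gauss_density_integrable.integrableOn
      (Filter.Eventually.of_forall (fun u => by positivity))
      (HasSubset.Subset.eventuallyLE (Set.Iic_subset_Iic.mpr hab))
  exact hmono.measurable

/-- derivative of `t ↦ p^(1/(1-t)) + (1-p)^(1/(1-t))`. -/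
noncomputable def dAux (p t : ℝ) : ℝ :=
  (p ^ (1/(1-t)) * Real.log p + (1 - p) ^ (1/(1-t)) * Real.log (1-p)) / (1-t)^2

/-- derivative of `t ↦ (p^(1/(1-t)) + (1-p)^(1/(1-t)))^(1-t)`. -/
noncomputable def dfn (p t : ℝ) : ℝ :=
  dAux p t * (1-t) * (p ^ (1/(1-t)) + (1-p) ^ (1/(1-t))) ^ ((1-t) - 1)
  + (-1) * (p ^ (1/(1-t)) + (1-p) ^ (1/(1-t))) ^ (1-t)
      * Real.log (p ^ (1/(1-t)) + (1-p) ^ (1/(1-t)))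

lemma hasDerivAt_s (t : ℝ) (ht : t ≠ 1) :
    HasDerivAt (fun t : ℝ => 1/(1-t)) (1/(1-t)^2) t := by
  have ht1 : (1:ℝ) - t ≠ 0 := sub_ne_zero.mpr (Ne.symm ht)
  have h := (((hasDerivAt_id t).const_sub 1).inv ht1)
  simp only [one_div]
  exact h.congr_deriv (by simp)

lemma hasDerivAt_pow_s (p t : ℝ) (hp : 0 ≤ p) (ht : t < 1) :
    HasDerivAt (fun t : ℝ => p ^ (1/(1-t))) (p ^ (1/(1-t)) * Real.log p / (1-t)^2) t := by
  rcases eq_or_lt_of_le hp with hp0 | hp0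
  · have hne : (1:ℝ)/(1-t) ≠ 0 := by
      have h : (1:ℝ) - t ≠ 0 := by intro h; linarith [sub_eq_zero.mp h]
      simp [h]
    have hc : HasDerivAt (fun _ : ℝ => (0:ℝ)) 0 t := hasDerivAt_const t 0
    have heq : (fun t : ℝ => p ^ (1/(1-t))) =ᶠ[nhds t] (fun _ : ℝ => (0:ℝ)) := by
      have hopen : {t' : ℝ | t' ≠ 1} ∈ nhds t := isOpen_ne.mem_nhds (ne_of_lt ht)
      filter_upwards [hopen] with t' ht'
      have h : (1:ℝ)/(1-t') ≠ 0 := by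
        have h' : (1:ℝ) - t' ≠ 0 := sub_ne_zero.mpr (Ne.symm ht')
        simp [h']
      rw [← hp0, Real.zero_rpow h]
    have hval : p ^ (1/(1-t)) * Real.log p / (1-t)^2 = 0 := by
      rw [← hp0, Real.zero_rpow hne]; simp
    rw [hval]
    exact hc.congr_of_eventuallyEq heq
  · have hs := hasDerivAt_s t (ne_of_lt ht)
    have h := ((Real.hasStrictDerivAt_const_rpow hp0 (1/(1-t))).hasDerivAt).comp t hs
    refine h.congr_deriv ?_
    ring

lemma A_pos {p e : ℝ} (hp0 : 0 ≤ p) (hp1 : p ≤ 1) (he : 0 < e) :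
    0 < p ^ e + (1-p) ^ e := by
  rcases le_total p (1/2) with h | h
  · have h1 : (0:ℝ) < 1 - p := by linarith
    have h2 := Real.rpow_pos_of_pos h1 e
    have h3 := Real.rpow_nonneg hp0 e
    linarith
  · have h1 : (0:ℝ) < p := by linarith
    have h2 := Real.rpow_pos_of_pos h1 e
    have h3 := Real.rpow_nonneg (by linarith : (0:ℝ) ≤ 1 - p) e
    linarith

lemma hasDerivAt_g (p : ℝ) (hp0 : 0 ≤ p) (hp1 : p ≤ 1) (t : ℝ) (ht : t < 1) :
    HasDerivAt (fun t : ℝ => (p ^ (1/(1-t)) + (1-p) ^ (1/(1-t))) ^ (1-t)) (dfn p t) t := by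
  have hA : HasDerivAt (fun t : ℝ => p ^ (1/(1-t)) + (1-p) ^ (1/(1-t))) (dAux p t) t := by
    have h := (hasDerivAt_pow_s p t hp0 ht).add (hasDerivAt_pow_s (1-p) t (by linarith) ht)
    refine h.congr_deriv ?_
    unfold dAux
    ring
  have hg : HasDerivAt (fun t : ℝ => 1 - t) (-1) t := (hasDerivAt_id t).const_sub 1
  have hApos : 0 < p ^ (1/(1-t)) + (1-p) ^ (1/(1-t)) := by
    refine A_pos hp0 hp1 ?_
    have h : (0:ℝ) < 1 - t := by linarith
    positivity
  exact hA.rpow hg hApos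

lemma dfn_zero (p : ℝ) : dfn p 0 = p * Real.log p + (1-p) * Real.log (1-p) := by
  unfold dfn dAux
  norm_num [Real.rpow_one]

lemma rpow_log_abs_le {q e : ℝ} (hq0 : 0 ≤ q) (hq1 : q ≤ 1) (he : 4/5 ≤ e) :
    |q ^ e * Real.log q| ≤ 2 := by
  rcases eq_or_lt_of_le hq0 with h | h
  · rw [← h, Real.zero_rpow (by positivity : e ≠ 0)]
    simp
  · have hlt := Real.abs_log_mul_self_rpow_lt q e h hq1 (by linarith)
    have h2 : (1:ℝ)/e ≤ 2 := by
      rw [div_le_iff₀ (by linarith)]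
      linarith
    calc |q ^ e * Real.log q| = |Real.log q * q ^ e| := by rw [mul_comm]
      _ ≤ 1/e := le_of_lt hlt
      _ ≤ 2 := h2

lemma dfn_bound {p t : ℝ} (hp0 : 0 ≤ p) (hp1 : p ≤ 1) (ht : |t| ≤ 1/4) :
    |dfn p t| ≤ 13 * Real.exp 6 := by
  obtain ⟨htl, htr⟩ := abs_le.mp ht
  have ht1 : (3:ℝ)/4 ≤ 1 - t := by linarith
  have ht2 : (1:ℝ) - t ≤ 5/4 := by linarith
  have htpos : (0:ℝ) < 1 - t := by linarith
  set e := 1/(1-t) with he_def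
  have he1 : (4:ℝ)/5 ≤ e := by
    rw [he_def, le_div_iff₀ htpos]
    linarith
  have he2 : e ≤ 2 := by
    rw [he_def, div_le_iff₀ htpos]
    linarith
  have hq0 : (0:ℝ) ≤ 1 - p := by linarith
  have hq1 : (1:ℝ) - p ≤ 1 := by linarith
  set A := p ^ e + (1-p) ^ e with hA_def
  have hApos : 0 < A := A_pos hp0 hp1 (by linarith)
  have h14 : ((1:ℝ)/2) ^ (2:ℝ) = 1/4 := by
    rw [show (2:ℝ) = ((2:ℕ):ℝ) by norm_num, Real.rpow_natCast]
    norm_num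
  have hA1 : (1:ℝ)/4 ≤ A := by
    have key : ∀ r : ℝ, 1/2 ≤ r → r ≤ 1 → (1:ℝ)/4 ≤ r ^ e := by
      intro r hr hr1
      calc (1:ℝ)/4 = ((1:ℝ)/2) ^ (2:ℝ) := h14.symm
        _ ≤ ((1:ℝ)/2) ^ e :=
            Real.rpow_le_rpow_of_exponent_ge (by norm_num) (by norm_num) he2
        _ ≤ r ^ e := Real.rpow_le_rpow (by norm_num) hr (by linarith)
    rcases le_total p (1/2) with h | h
    · have := key (1-p) (by linarith) hq1
      have := Real.rpow_nonneg hp0 e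
      rw [hA_def]; linarith
    · have := key p h hp1
      have := Real.rpow_nonneg hq0 e
      rw [hA_def]; linarith
  have hA2 : A ≤ 2 := by
    have h1 := Real.rpow_le_one hp0 hp1 (by linarith : (0:ℝ) ≤ e)
    have h2 := Real.rpow_le_one hq0 hq1 (by linarith : (0:ℝ) ≤ e)
    rw [hA_def]; linarith
  have hlogA : |Real.log A| ≤ 3 := by
    rw [abs_le]
    constructor
    · have h1 : Real.log A⁻¹ ≤ A⁻¹ - 1 := Real.log_le_sub_one_of_pos (by positivity)
      have h2 : A⁻¹ ≤ 4 := by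
        rw [inv_le_comm₀ (by positivity) (by norm_num)]
        linarith
      rw [Real.log_inv] at h1
      linarith
    · have h1 : Real.log A ≤ A - 1 := Real.log_le_sub_one_of_pos hApos
      linarith
  have hrpow : ∀ u : ℝ, |u| ≤ 2 → A ^ u ≤ Real.exp 6 := by
    intro u hu
    rw [Real.rpow_def_of_pos hApos]
    apply Real.exp_le_exp.mpr
    calc Real.log A * u ≤ |Real.log A * u| := le_abs_self _
      _ = |Real.log A| * |u| := abs_mul _ _
      _ ≤ 3 * 2 := by
          apply mul_le_mul hlogA hu (abs_nonneg _) (by norm_num)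
      _ = 6 := by norm_num
  have hexp_pos : (0:ℝ) < Real.exp 6 := Real.exp_pos 6
  have hdAux : |dAux p t| ≤ 8 := by
    have hnum : |p ^ e * Real.log p + (1-p) ^ e * Real.log (1-p)| ≤ 4 := by
      calc |p ^ e * Real.log p + (1-p) ^ e * Real.log (1-p)|
          ≤ |p ^ e * Real.log p| + |(1-p) ^ e * Real.log (1-p)| := abs_add_le _ _
        _ ≤ 2 + 2 := add_le_add (rpow_log_abs_le hp0 hp1 he1)
            (rpow_log_abs_le hq0 hq1 he1)
        _ = 4 := by norm_num
    have hden : (9:ℝ)/16 ≤ (1-t)^2 := by nlinarith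
    unfold dAux
    rw [abs_div, abs_of_nonneg (by positivity : (0:ℝ) ≤ (1-t)^2)]
    rw [div_le_iff₀ (by nlinarith : (0:ℝ) < (1-t)^2)]
    calc |p ^ (1/(1-t)) * Real.log p + (1 - p) ^ (1/(1-t)) * Real.log (1-p)| ≤ 4 := hnum
      _ ≤ 8 * ((1-t)^2) := by nlinarith
  have h1t : |1 - t| ≤ 5/4 := by rw [abs_le]; constructor <;> linarith
  have hApow1 : |A ^ ((1-t) - 1)| ≤ Real.exp 6 := by
    rw [abs_of_nonneg (Real.rpow_nonneg hApos.le _)]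
    apply hrpow
    rw [abs_le]; constructor <;> linarith
  have hApow2 : |A ^ (1-t)| ≤ Real.exp 6 := by
    rw [abs_of_nonneg (Real.rpow_nonneg hApos.le _)]
    apply hrpow
    rw [abs_le]; constructor <;> linarith
  have hterm1 : |dAux p t * (1-t) * A ^ ((1-t) - 1)| ≤ 8 * (5/4) * Real.exp 6 := by
    rw [abs_mul, abs_mul]
    have h8 : |dAux p t| * |1 - t| ≤ 8 * (5/4) :=
      mul_le_mul hdAux h1t (abs_nonneg _) (by norm_num)
    exact mul_le_mul h8 hApow1 (abs_nonneg _) (by norm_num)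
  have hterm2 : |(-1) * A ^ (1-t) * Real.log A| ≤ 3 * Real.exp 6 := by
    rw [abs_mul, abs_mul, abs_neg, abs_one, one_mul]
    have := mul_le_mul hApow2 hlogA (abs_nonneg _) hexp_pos.le
    linarith
  have habs : |dfn p t| ≤ |dAux p t * (1-t) * A ^ ((1-t) - 1)|
      + |(-1) * A ^ (1-t) * Real.log A| := by
    unfold dfn
    exact abs_add_le _ _
  linarith

/-- The function `φ[P,v]` from the security analysis. -/
noncomputable def phiFn (P : ℝ → ℝ) (v : ℝ) (t : ℝ) : ℝ :=
  Real.logb 2 (∫ x, (stdGaussianCDF (x / Real.sqrt v) ^ (1 / (1 - t))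
    + (1 - stdGaussianCDF (x / Real.sqrt v)) ^ (1 / (1 - t))) ^ (1 - t) * P x)

/-- The conditional entropy quantity `H[P,v]`. -/
noncomputable def HFn (P : ℝ → ℝ) (v : ℝ) : ℝ :=
  - ∫ x, (stdGaussianCDF (x / Real.sqrt v) * Real.logb 2 (stdGaussianCDF (x / Real.sqrt v))
    + (1 - stdGaussianCDF (x / Real.sqrt v))
      * Real.logb 2 (1 - stdGaussianCDF (x / Real.sqrt v))) * P x

/-- The right derivative of `φ[P,v]` at `0` equals `−H[P,v]`. -/
theorem stmt_7 (v : ℝ) (hv : 0 < v) (P : ℝ → ℝ)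
    (hP_nonneg : ∀ x, 0 ≤ P x) (hP_meas : Measurable P)
    (hP_int : Integrable P) (hP_one : ∫ x, P x = 1)
    (hP_mom2 : Integrable (fun x => x ^ 2 * P x))
    (hInt : ∀ t ∈ Set.Ico (0 : ℝ) 1,
      Integrable (fun x => (stdGaussianCDF (x / Real.sqrt v) ^ (1 / (1 - t))
        + (1 - stdGaussianCDF (x / Real.sqrt v)) ^ (1 / (1 - t))) ^ (1 - t) * P x))
    (hIntH : Integrable (fun x =>
      (stdGaussianCDF (x / Real.sqrt v) * Real.logb 2 (stdGaussianCDF (x / Real.sqrt v))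
        + (1 - stdGaussianCDF (x / Real.sqrt v))
          * Real.logb 2 (1 - stdGaussianCDF (x / Real.sqrt v))) * P x)) :
    HasDerivWithinAt (phiFn P v) (-(HFn P v)) (Set.Ici (0 : ℝ)) 0 := by
  set Φv : ℝ → ℝ := fun x => stdGaussianCDF (x / Real.sqrt v) with hΦv_def
  have hΦv_meas : Measurable Φv :=
    stdGaussianCDF_measurable.comp (measurable_id.div_const _)
  have hΦ0 : ∀ x, 0 ≤ Φv x := fun x => stdGaussianCDF_nonneg _
  have hΦ1 : ∀ x, Φv x ≤ 1 := fun x => stdGaussianCDF_le_one _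
  set F : ℝ → ℝ → ℝ := fun t x =>
    (Φv x ^ (1/(1-t)) + (1 - Φv x) ^ (1/(1-t))) ^ (1-t) * P x with hF_def
  set F' : ℝ → ℝ → ℝ := fun t x => dfn (Φv x) t * P x with hF'_def
  have key : Integrable (F' 0) volume ∧
      HasDerivAt (fun t => ∫ x, F t x) (∫ x, F' 0 x) 0 := by
    apply hasDerivAt_integral_of_dominated_loc_of_deriv_le
      (bound := fun x => (13 * Real.exp 6) * P x) (Metric.ball_mem_nhds (0:ℝ) (by norm_num : (0:ℝ) < 1/4))
    · -- measurability of F t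
      filter_upwards [Metric.ball_mem_nhds (0:ℝ) (by norm_num : (0:ℝ) < 1/2)] with t ht
      have ht' : |t| < 1/2 := by simpa [Real.dist_eq] using ht
      have hepos : (0:ℝ) ≤ 1/(1-t) := by
        have : (0:ℝ) < 1 - t := by cases abs_lt.mp ht'; linarith
        positivity
      have h1t : (0:ℝ) ≤ 1 - t := by
        obtain ⟨h1, h2⟩ := abs_lt.mp ht'
        linarith
      apply Measurable.aestronglyMeasurable
      exact (((Real.continuous_rpow_const h1t).measurable).comp
        ((((Real.continuous_rpow_const hepos).measurable).comp hΦv_meas).add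
          (((Real.continuous_rpow_const hepos).measurable).comp
            (hΦv_meas.const_sub 1)))).mul hP_meas
    · exact hInt 0 ⟨le_refl _, by norm_num⟩
    · -- measurability of F' 0
      apply Measurable.aestronglyMeasurable
      have hforms : F' 0 = fun x =>
          (Φv x * Real.log (Φv x) + (1 - Φv x) * Real.log (1 - Φv x)) * P x := by
        funext x
        simp only [hF'_def]
        rw [dfn_zero]
      rw [hforms]
      exact ((hΦv_meas.mul (Real.measurable_log.comp hΦv_meas)).add
        ((hΦv_meas.const_sub 1).mul
          (Real.measurable_log.comp (hΦv_meas.const_sub 1)))).mul hP_meas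
    · -- bound
      apply Filter.Eventually.of_forall
      intro x t ht
      have ht' : |t| ≤ 1/4 := by
        have := mem_ball_iff_norm.mp ht
        simp only [sub_zero] at this
        exact le_of_lt (by simpa using this)
      simp only [hF'_def, Real.norm_eq_abs, abs_mul, abs_of_nonneg (hP_nonneg x)]
      exact mul_le_mul_of_nonneg_right (dfn_bound (hΦ0 x) (hΦ1 x) ht') (hP_nonneg x)
    · exact hP_int.const_mul _
    · -- differentiability
      apply Filter.Eventually.of_forall
      intro x t ht
      have ht' : t < 1 := by
        have := mem_ball_iff_norm.mp ht
        simp only [sub_zero] at this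
        have := abs_lt.mp (by simpa using this)
        linarith [this.2]
      exact (hasDerivAt_g (Φv x) (hΦ0 x) (hΦ1 x) t ht').mul_const (P x)
  obtain ⟨hF'int, hderiv⟩ := key
  -- value of integral at 0
  have hG0 : (∫ x, F 0 x) = 1 := by
    have : (fun x => F 0 x) = P := by
      funext x
      simp only [hF_def]
      norm_num [Real.rpow_one]
    rw [this, hP_one]
  -- value of derivative integral
  have hlog2 : Real.log 2 ≠ 0 := ne_of_gt (Real.log_pos (by norm_num))
  have hI0' : (∫ x, F' 0 x) = Real.log 2 * (-(HFn P v)) := by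
    have heq : (fun x => F' 0 x) = fun x => Real.log 2 *
        ((Φv x * Real.logb 2 (Φv x) + (1 - Φv x) * Real.logb 2 (1 - Φv x)) * P x) := by
      funext x
      simp only [hF'_def, dfn_zero, Real.logb, div_eq_inv_mul]
      field_simp
    rw [heq, integral_const_mul]
    unfold HFn
    simp only [hΦv_def, neg_neg]
  -- chain rule with logb
  have hlog : HasDerivAt Real.log 1 (∫ x, F 0 x) := by
    rw [hG0]
    simpa using Real.hasDerivAt_log one_ne_zero
  have hcomp := (hlog.comp 0 hderiv).div_const (Real.log 2)
  have hphi : phiFn P v = fun t => Real.log (∫ x, F t x) / Real.log 2 := by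
    funext t
    simp only [phiFn, Real.logb, hF_def, hΦv_def]
  have hval : 1 * (∫ x, F' 0 x) / Real.log 2 = -(HFn P v) := by
    rw [hI0', one_mul, mul_comm, mul_div_assoc, div_self hlog2, mul_one]
  rw [hphi]
  rw [← hval]
  exact hcomp.hasDerivWithinAt
end

section
/- Let Φ denote the standard Gaussian cumulative distribution function and for a > 0 define Φ_a(x) := Φ(x/a). Then lim_{a → 1, a ≠ 1} (sup_x |Φ(x) − Φ_a(x)|) / |a − 1| = 1/√(2πe). -/
open MeasureTheory Real Filter

noncomputable def gpdf (x : ℝ) : ℝ := (1 / Real.sqrt (2 * Real.pi)) * Real.exp (-x ^ 2 / 2)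

lemma gpdf_cont : Continuous gpdf := by
  unfold gpdf; fun_prop

lemma gpdf_nonneg (x : ℝ) : 0 ≤ gpdf x := by
  unfold gpdf; positivity

lemma gpdf_integrable : Integrable gpdf := by
  have h : Integrable (fun x : ℝ => Real.exp (-(1/2 : ℝ) * x ^ 2)) :=
    integrable_exp_neg_mul_sq (by norm_num)
  have := h.const_mul (1 / Real.sqrt (2 * Real.pi))
  convert this using 2 with x
  · unfold gpdf; ring_nf

lemma cdf_sub (x y : ℝ) :
    stdGaussianCDF x - stdGaussianCDF y = ∫ u in y..x, gpdf u := by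
  unfold stdGaussianCDF
  exact intervalIntegral.integral_Iic_sub_Iic
    gpdf_integrable.integrableOn gpdf_integrable.integrableOn

lemma cdf_hasDeriv (x : ℝ) : HasDerivAt stdGaussianCDF (gpdf x) x := by
  have hfun : stdGaussianCDF = fun y => stdGaussianCDF 0 + ∫ u in (0:ℝ)..y, gpdf u := by
    funext y
    rw [← cdf_sub]; ring
  have h : HasDerivAt (fun y => ∫ u in (0:ℝ)..y, gpdf u) (gpdf x) x :=
    intervalIntegral.integral_hasDerivAt_right
      (gpdf_integrable.intervalIntegrable)
      (gpdf_cont.stronglyMeasurable.stronglyMeasurableAtFilter)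
      gpdf_cont.continuousAt
  rw [hfun]
  exact h.const_add (stdGaussianCDF 0)

lemma xexp_le (m : ℝ) (hm : 0 ≤ m) : m * gpdf m ≤ gpdf 1 := by
  unfold gpdf
  rw [mul_comm m, mul_assoc]
  have hs : (0:ℝ) < 1 / Real.sqrt (2 * Real.pi) := by positivity
  apply mul_le_mul_of_nonneg_left _ hs.le
  have key : m ≤ Real.exp ((m^2 - 1)/2) := by
    have := Real.add_one_le_exp ((m^2 - 1)/2)
    nlinarith [sq_nonneg (m - 1)]
  have h2 : Real.exp (-m^2/2) * m ≤ Real.exp (-m^2/2) * Real.exp ((m^2-1)/2) :=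
    mul_le_mul_of_nonneg_left key (Real.exp_nonneg _)
  calc Real.exp (-m^2/2) * m ≤ Real.exp (-m^2/2) * Real.exp ((m^2-1)/2) := h2
    _ = Real.exp (-(1:ℝ)^2/2) := by rw [← Real.exp_add]; ring_nf

lemma gpdf_anti {m u : ℝ} (hm : 0 ≤ m) (h : m ≤ |u|) : gpdf u ≤ gpdf m := by
  unfold gpdf
  apply mul_le_mul_of_nonneg_left _ (by positivity)
  apply Real.exp_le_exp.mpr
  have : m^2 ≤ u^2 := by
    have h2 := sq_abs u
    nlinarith [abs_nonneg u]
  linarith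

lemma key_bound {a : ℝ} (ha : 0 < a) (x : ℝ) :
    |stdGaussianCDF x - stdGaussianCDF (x / a)| ≤ |a - 1| * (max 1 a / a) * gpdf 1 := by
  set m := min |x| (|x| / a) with hm
  have hm0 : 0 ≤ m := le_min (abs_nonneg x) (by positivity)
  have hxm : |x| = max 1 a * m := by
    rcases le_total a 1 with h1 | h1
    · have hle : |x| ≤ |x| / a := by
        rw [le_div_iff₀ ha]
        nlinarith [abs_nonneg x]
      rw [hm, min_eq_left hle, max_eq_left h1, one_mul]
    · have hle : |x| / a ≤ |x| := by
        rw [div_le_iff₀ ha]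
        nlinarith [abs_nonneg x]
      rw [hm, min_eq_right hle, max_eq_right h1]
      field_simp
  have hpt : ∀ u ∈ Set.uIoc (x / a) x, ‖gpdf u‖ ≤ gpdf m := by
    intro u hu
    rw [Set.uIoc] at hu
    rw [Real.norm_eq_abs, abs_of_nonneg (gpdf_nonneg u)]
    apply gpdf_anti hm0
    rcases le_total 0 x with hx | hx
    · have h1 : m ≤ x / a := by
        rw [hm, abs_of_nonneg hx]; exact min_le_right _ _
      have h2 : m ≤ x := by
        rw [hm, abs_of_nonneg hx]; exact min_le_left _ _
      have : m ≤ u := le_of_lt (lt_of_le_of_lt (le_min h1 h2) hu.1)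
      exact this.trans (le_abs_self u)
    · have h1 : x / a ≤ -m := by
        have : m ≤ -(x / a) := by
          rw [hm, abs_of_nonpos hx]
          calc min (-x) (-x / a) ≤ -x / a := min_le_right _ _
            _ = -(x/a) := by ring
        linarith
      have h2 : x ≤ -m := by
        have : m ≤ -x := by
          rw [hm, abs_of_nonpos hx]; exact min_le_left _ _
        linarith
      have : u ≤ -m := hu.2.trans (max_le h1 h2)
      have : m ≤ -u := by linarith
      exact this.trans (neg_le_abs u)
  have hInt : |∫ u in (x/a)..x, gpdf u| ≤ gpdf m * |x - x / a| :=
    intervalIntegral.norm_integral_le_of_norm_le_const hpt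
  rw [cdf_sub]
  refine hInt.trans ?_
  have hxd : |x - x / a| = |x| * |a - 1| / a := by
    rw [show x - x / a = x * (a - 1) / a by field_simp, abs_div, abs_mul, abs_of_pos ha]
  rw [hxd, hxm]
  have hc : 0 ≤ |a - 1| * (max 1 a / a) := by positivity
  calc gpdf m * (max 1 a * m * |a - 1| / a)
      = (|a - 1| * (max 1 a / a)) * (m * gpdf m) := by ring
    _ ≤ (|a - 1| * (max 1 a / a)) * gpdf 1 := mul_le_mul_of_nonneg_left (xexp_le m hm0) hc
    _ = |a - 1| * (max 1 a / a) * gpdf 1 := by ring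

lemma sup_bdd {a : ℝ} (ha : 0 < a) :
    BddAbove (Set.range fun x => |stdGaussianCDF x - stdGaussianCDF (x / a)|) := by
  refine ⟨|a - 1| * (max 1 a / a) * gpdf 1, ?_⟩
  rintro _ ⟨x, rfl⟩
  exact key_bound ha x

lemma gpdf_one : gpdf 1 = 1 / Real.sqrt (2 * Real.pi * Real.exp 1) := by
  have h1 : Real.sqrt (Real.exp 1) = Real.exp (1/2) := by
    rw [show Real.exp 1 = Real.exp (1/2) ^ 2 by rw [sq, ← Real.exp_add]; norm_num]
    exact Real.sqrt_sq (Real.exp_nonneg _)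
  rw [gpdf, Real.sqrt_mul (by positivity : (0:ℝ) ≤ 2 * Real.pi), h1]
  rw [show (-(1:ℝ)^2/2) = -(1/2) by norm_num, Real.exp_neg]
  have h2 : Real.sqrt (2 * Real.pi) ≠ 0 := by positivity
  have h3 : Real.exp (1/2) ≠ 0 := Real.exp_ne_zero _
  field_simp

/-- As `a → 1` with `a ≠ 1`, `(sup_x |Φ(x) − Φ(x/a)|)/|a − 1| → 1/√(2πe)`. -/
theorem stmt_12 :
    Tendsto (fun a : ℝ => (⨆ x : ℝ, |stdGaussianCDF x - stdGaussianCDF (x / a)|) / |a - 1|)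
      (nhdsWithin 1 {1}ᶜ)
      (nhds (1 / Real.sqrt (2 * Real.pi * Real.exp 1))) := by
  rw [← gpdf_one]
  -- lower comparison function tends to gpdf 1
  have h1 : HasDerivAt (fun a : ℝ => stdGaussianCDF (1 / a)) (-gpdf 1) 1 := by
    have hinv : HasDerivAt (fun a : ℝ => 1 / a) (-1) 1 := by
      simpa using hasDerivAt_inv (one_ne_zero (α := ℝ))
    have hg : HasDerivAt stdGaussianCDF (gpdf 1) ((fun a : ℝ => 1 / a) 1) := by
      norm_num; exact cdf_hasDeriv 1
    have := hg.comp 1 hinv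
    simpa [Function.comp_def, one_div] using this
  have hslope := hasDerivAt_iff_tendsto_slope.mp h1
  have hlow : Tendsto (fun a : ℝ => |stdGaussianCDF 1 - stdGaussianCDF (1 / a)| / |a - 1|)
      (nhdsWithin 1 {1}ᶜ) (nhds (gpdf 1)) := by
    have habs := hslope.abs
    rw [abs_neg, abs_of_nonneg (gpdf_nonneg 1)] at habs
    refine habs.congr (fun a => ?_)
    rw [slope_def_field, abs_div]
    norm_num [abs_sub_comm]
  have hup : Tendsto (fun a : ℝ => max 1 a / a * gpdf 1)
      (nhdsWithin 1 {1}ᶜ) (nhds (gpdf 1)) := by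
    have hc : ContinuousAt (fun a : ℝ => max 1 a / a * gpdf 1) 1 :=
      (((continuousAt_const.max continuousAt_id).div continuousAt_id one_ne_zero).mul
        continuousAt_const)
    have h2 : Tendsto (fun a : ℝ => max 1 a / a * gpdf 1) (nhdsWithin 1 {1}ᶜ)
        (nhds (max 1 1 / 1 * gpdf 1)) := hc.tendsto.mono_left nhdsWithin_le_nhds
    simpa using h2
  have hev : ∀ᶠ a in nhdsWithin (1:ℝ) {1}ᶜ, 0 < a ∧ a ≠ 1 := by
    filter_upwards [eventually_nhdsWithin_of_eventually_nhds
        (eventually_gt_nhds (by norm_num : (0:ℝ) < 1)), self_mem_nhdsWithin] with a h1 h2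
    exact ⟨h1, h2⟩
  refine tendsto_of_tendsto_of_tendsto_of_le_of_le' hlow hup ?_ ?_
  · filter_upwards [hev] with a ⟨hpos, hne⟩
    gcongr
    · exact le_ciSup (sup_bdd hpos) 1
  · filter_upwards [hev] with a ⟨hpos, hne⟩
    rw [div_le_iff₀ (abs_pos.mpr (sub_ne_zero.mpr hne))]
    apply ciSup_le
    intro x
    exact (key_bound hpos x).trans (le_of_eq (by ring))
end
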